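/- Let p be a probability distribution on a finite set X and let δ > 0. Then there exist a constant c > 0 and N ∈ ℕ such that for all n ≥ N, the i.i.d. product measure of the typical set satisfies ∑_{x₁ⁿ ∈ T^n_{p,δ}} ∏_{i=1}^{n} p(x_i) ≥ 1 − 2^{−n c δ²}. Equivalently, for a d×d density matrix ρ with eigenvalue distribution p, tr(ρ^{⊗n} Π_{ρ,δ}) ≥ 1 − 2^{−n c δ²} for all n ≥ N. -/

import Mathlib

open scoped Classical ComplexOrder Matrix

/-- The typical set `T^n_{p,δ}`: words `w` of length `n` such that for every letter `x`,
`|N(x|w) − n p(x)| ≤ n δ`, where `N(x|w)` counts the occurrences of `x` in `w`. -/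
noncomputable def typicalSet {X : Type*} [Fintype X] [DecidableEq X]
    (p : X → ℝ) (n : ℕ) (δ : ℝ) : Finset (Fin n → X) :=
  Finset.univ.filter fun w => ∀ x : X,
    |((Finset.univ.filter fun i => w i = x).card : ℝ) - n * p x| ≤ n * δ

/-- The `n`-fold tensor (Kronecker) power of a matrix. -/
noncomputable def tensorPow {X : Type*} [Fintype X] (ρ : Matrix X X ℂ) (n : ℕ) :
    Matrix (Fin n → X) (Fin n → X) ℂ :=
  Matrix.of fun a b => ∏ i, ρ (a i) (b i)

/-- The family `e` is an orthonormal system of vectors. -/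
def OrthonormalFamily {X : Type*} [Fintype X] [DecidableEq X] (e : X → X → ℂ) : Prop :=
  ∀ k l, (∑ a, (starRingEnd ℂ) (e k a) * e l a) = if k = l then 1 else 0

/-- The typical projector `Π_{ρ,δ} = ∑_{k₁ⁿ ∈ T^n_{λ,δ}} |e_{k₁}⟩⟨e_{k₁}| ⊗ ⋯ ⊗ |e_{kₙ}⟩⟨e_{kₙ}|`
associated with the eigenbasis `e` and eigenvalue distribution `lam`. -/
noncomputable def typicalProj {X : Type*} [Fintype X] [DecidableEq X]
    (e : X → X → ℂ) (lam : X → ℝ) (n : ℕ) (δ : ℝ) :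
    Matrix (Fin n → X) (Fin n → X) ℂ :=
  ∑ f ∈ typicalSet lam n δ, Matrix.of fun a b =>
    (∏ i, e (f i) (a i)) * ∏ i, (starRingEnd ℂ) (e (f i) (b i))


open Finset in
private lemma tp_exp_quad (s : ℝ) (hs : |s| ≤ 1) : Real.exp s ≤ 1 + s + s ^ 2 := by
  have h := Real.exp_bound hs (n := 2) (by norm_num)
  have h2 : ∑ m ∈ Finset.range 2, s ^ m / m.factorial = 1 + s := by
    simp [Finset.sum_range_succ]
  rw [h2] at h
  have h3 := (abs_sub_le_iff.1 h).1
  have h4 : ((Nat.succ 2 : ℕ) : ℝ) / ((Nat.factorial 2 : ℕ) * (2:ℕ)) = 3/4 := by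
    norm_num [Nat.factorial]
  rw [h4, sq_abs] at h3
  nlinarith [sq_nonneg s]

open Finset in
private lemma tp_mgf_bound {X : Type*} [Fintype X] [DecidableEq X]
    (p : X → ℝ) (hp0 : ∀ x, 0 ≤ p x) (hp1 : ∑ x, p x = 1)
    (x : X) (t : ℝ) (ht : |t| ≤ 1) :
    ∑ a, p a * Real.exp (t * ((if a = x then 1 else 0) - p x)) ≤ Real.exp (t ^ 2) := by
  have hpx1 : p x ≤ 1 := hp1 ▸ Finset.single_le_sum (fun a _ => hp0 a) (mem_univ x)
  have key : ∀ a : X, p a * Real.exp (t * ((if a = x then 1 else 0) - p x)) ≤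
      p a * (1 + t * ((if a = x then 1 else 0) - p x) + t^2 * ((if a = x then 1 else 0) - p x)^2) := by
    intro a
    apply mul_le_mul_of_nonneg_left _ (hp0 a)
    have habs : |t * ((if a = x then 1 else 0) - p x)| ≤ 1 := by
      rw [abs_mul]
      have : |(if a = x then (1:ℝ) else 0) - p x| ≤ 1 := by
        have := hp0 x
        split <;> [skip; skip] <;> rw [abs_le] <;> constructor <;> linarith
      calc |t| * |(if a = x then (1:ℝ) else 0) - p x| ≤ 1 * 1 :=
        mul_le_mul ht this (abs_nonneg _) zero_le_one
      _ = 1 := by ring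
    calc Real.exp (t * ((if a = x then 1 else 0) - p x)) ≤
        1 + t * ((if a = x then 1 else 0) - p x) + (t * ((if a = x then 1 else 0) - p x))^2 :=
          tp_exp_quad _ habs
      _ = 1 + t * ((if a = x then 1 else 0) - p x) + t^2 * ((if a = x then 1 else 0) - p x)^2 := by
          ring
  calc ∑ a, p a * Real.exp (t * ((if a = x then 1 else 0) - p x))
      ≤ ∑ a, p a * (1 + t * ((if a = x then 1 else 0) - p x) + t^2 * ((if a = x then 1 else 0) - p x)^2) :=
        Finset.sum_le_sum fun a _ => key a
    _ ≤ 1 + t ^ 2 := by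
        have e1 : ∑ a, p a * (if a = x then (1:ℝ) else 0) = p x := by
          simp [mul_ite]
        have e2 : ∀ a : X, p a * (1 + t * ((if a = x then 1 else 0) - p x) + t^2 * ((if a = x then 1 else 0) - p x)^2)
            = p a + t * (p a * (if a = x then 1 else 0) - p a * p x)
              + t^2 * (p a * ((if a = x then 1 else 0) - p x)^2) := fun a => by ring
        simp only [e2]
        rw [Finset.sum_add_distrib, Finset.sum_add_distrib, ← Finset.mul_sum, ← Finset.mul_sum,
          Finset.sum_sub_distrib, e1, ← Finset.sum_mul, hp1]
        have : ∑ a, p a * ((if a = x then (1:ℝ) else 0) - p x)^2 ≤ ∑ a, p a * 1 := by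
          apply Finset.sum_le_sum
          intro a _
          apply mul_le_mul_of_nonneg_left _ (hp0 a)
          have := hp0 x
          rw [← sq_abs]
          have : |(if a = x then (1:ℝ) else 0) - p x| ≤ 1 := by
            split <;> rw [abs_le] <;> constructor <;> linarith
          nlinarith [abs_nonneg ((if a = x then (1:ℝ) else 0) - p x)]
        simp only [mul_one] at this
        rw [hp1] at this
        nlinarith [sq_nonneg t]
    _ ≤ Real.exp (t ^ 2) := by linarith [Real.add_one_le_exp (t^2)]

open Finset in
private lemma tp_sum_prod_pow {X : Type*} [Fintype X] (n : ℕ) (f : X → ℝ) :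
    ∑ w : Fin n → X, ∏ i, f (w i) = (∑ a, f a) ^ n := by
  rw [← Fintype.prod_sum (fun (_ : Fin n) (a : X) => f a)]
  simp

open Finset in
private lemma tp_chernoff {X : Type*} [Fintype X] [DecidableEq X]
    (p : X → ℝ) (hp0 : ∀ x, 0 ≤ p x) (hp1 : ∑ x, p x = 1)
    (n : ℕ) (x : X) (t a : ℝ) (ht : |t| ≤ 1)
    (hmgf : ∑ b, p b * Real.exp (t * ((if b = x then 1 else 0) - p x)) ≤ Real.exp (t ^ 2)) :
    ∑ w ∈ univ.filter (fun w : Fin n → X =>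
        a ≤ t * (((univ.filter fun i => w i = x).card : ℝ) - n * p x)), ∏ i, p (w i)
      ≤ Real.exp (n * t ^ 2 - a) := by
  set g : (Fin n → X) → ℝ := fun w => t * (((univ.filter fun i => w i = x).card : ℝ) - n * p x)
  have hq : ∀ w : Fin n → X, 0 ≤ ∏ i, p (w i) := fun w => Finset.prod_nonneg fun i _ => hp0 _
  have step1 : ∑ w ∈ univ.filter (fun w : Fin n → X => a ≤ g w), ∏ i, p (w i)
      ≤ ∑ w : Fin n → X, (∏ i, p (w i)) * Real.exp (g w - a) := by
    calc ∑ w ∈ univ.filter (fun w : Fin n → X => a ≤ g w), ∏ i, p (w i)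
        ≤ ∑ w ∈ univ.filter (fun w : Fin n → X => a ≤ g w), (∏ i, p (w i)) * Real.exp (g w - a) := by
          apply Finset.sum_le_sum
          intro w hw
          have := (Finset.mem_filter.mp hw).2
          have h1 : (1:ℝ) ≤ Real.exp (g w - a) := by
            rw [← Real.exp_zero]
            exact Real.exp_le_exp.mpr (by linarith)
          nlinarith [hq w]
      _ ≤ ∑ w : Fin n → X, (∏ i, p (w i)) * Real.exp (g w - a) :=
          Finset.sum_le_sum_of_subset_of_nonneg (Finset.filter_subset _ _)
            (fun w _ _ => mul_nonneg (hq w) (Real.exp_pos _).le)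
  have hg : ∀ w : Fin n → X, g w = ∑ i, t * ((if w i = x then 1 else 0) - p x) := by
    intro w
    have hc : ((univ.filter fun i => w i = x).card : ℝ) = ∑ i, (if w i = x then (1:ℝ) else 0) := by
      rw [Finset.card_filter]
      push_cast
      simp
    simp only [g, hc]
    rw [← Finset.mul_sum, Finset.sum_sub_distrib, Finset.sum_const, Finset.card_univ,
      Fintype.card_fin, nsmul_eq_mul]
  have step2 : ∑ w : Fin n → X, (∏ i, p (w i)) * Real.exp (g w - a)
      = Real.exp (-a) * (∑ b, p b * Real.exp (t * ((if b = x then 1 else 0) - p x))) ^ n := by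
    rw [← tp_sum_prod_pow n (fun b => p b * Real.exp (t * ((if b = x then 1 else 0) - p x))),
      Finset.mul_sum]
    apply Finset.sum_congr rfl
    intro w _
    rw [hg w, sub_eq_add_neg, Real.exp_add, Real.exp_sum, Finset.prod_mul_distrib]
    ring
  have hbase : (0:ℝ) ≤ ∑ b, p b * Real.exp (t * ((if b = x then 1 else 0) - p x)) :=
    Finset.sum_nonneg fun b _ => mul_nonneg (hp0 b) (Real.exp_pos _).le
  calc ∑ w ∈ univ.filter (fun w : Fin n → X => a ≤ g w), ∏ i, p (w i)
      ≤ Real.exp (-a) * (∑ b, p b * Real.exp (t * ((if b = x then 1 else 0) - p x))) ^ n := by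
        rw [← step2]; exact step1
    _ ≤ Real.exp (-a) * (Real.exp (t ^ 2)) ^ n := by
        apply mul_le_mul_of_nonneg_left _ (Real.exp_pos _).le
        exact pow_le_pow_left₀ hbase hmgf n
    _ = Real.exp (n * t ^ 2 - a) := by
        rw [← Real.exp_nat_mul, ← Real.exp_add]
        ring_nf

open Finset in
private lemma tp_union_bound {α ι : Type*} [Fintype α] [Fintype ι]
    (P : α → Prop) [DecidablePred P] (Q : ι → α → Prop) [∀ i, DecidablePred (Q i)]
    (f : α → ℝ) (hf : ∀ a, 0 ≤ f a) (h : ∀ a, P a → ∃ i, Q i a) :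
    ∑ a ∈ univ.filter P, f a ≤ ∑ i, ∑ a ∈ univ.filter (Q i), f a := by
  calc ∑ a ∈ univ.filter P, f a
      ≤ ∑ a ∈ univ.filter P, f a * ∑ i, (if Q i a then (1:ℝ) else 0) := by
        apply Finset.sum_le_sum
        intro a ha
        obtain ⟨i, hi⟩ := h a (Finset.mem_filter.mp ha).2
        apply le_mul_of_one_le_right (hf a)
        calc (1:ℝ) = (if Q i a then (1:ℝ) else 0) := by simp [hi]
          _ ≤ ∑ i, (if Q i a then (1:ℝ) else 0) :=
            Finset.single_le_sum (f := fun j => if Q j a then (1:ℝ) else 0)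
              (fun j _ => by split <;> norm_num) (mem_univ i)
    _ ≤ ∑ a, f a * ∑ i, (if Q i a then (1:ℝ) else 0) :=
        Finset.sum_le_sum_of_subset_of_nonneg (Finset.filter_subset _ _)
          (fun a _ _ => mul_nonneg (hf a)
            (Finset.sum_nonneg fun j _ => by split <;> norm_num))
    _ = ∑ i, ∑ a ∈ univ.filter (Q i), f a := by
        simp only [Finset.mul_sum, mul_ite, mul_one, mul_zero]
        rw [Finset.sum_comm]
        exact Finset.sum_congr rfl fun i _ => (Finset.sum_filter _ _).symm

open Finset in
private lemma tp_classical_main {X : Type*} [Fintype X] [DecidableEq X]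
    (p : X → ℝ) (hp0 : ∀ x, 0 ≤ p x) (hp1 : ∑ x, p x = 1)
    (δ : ℝ) (hδ : 0 < δ) (hδ1 : δ ≤ 1) (n : ℕ) :
    1 - ∑ w ∈ typicalSet p n δ, ∏ i, p (w i)
      ≤ 2 * (Fintype.card X) * Real.exp (-(n : ℝ) * δ ^ 2 / 4) := by
  set P : (Fin n → X) → Prop := fun w => ∀ x : X,
    |((Finset.univ.filter fun i => w i = x).card : ℝ) - n * p x| ≤ n * δ with hP
  have htotal : ∑ w : Fin n → X, ∏ i, p (w i) = 1 := by
    rw [tp_sum_prod_pow, hp1, one_pow]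
  have hsplit := Finset.sum_filter_add_sum_filter_not Finset.univ P
    (fun w : Fin n → X => ∏ i, p (w i))
  rw [htotal] at hsplit
  have hTS : typicalSet p n δ = Finset.univ.filter P := rfl
  rw [hTS]
  have hstep : 1 - ∑ w ∈ Finset.univ.filter P, ∏ i, p (w i)
      = ∑ w ∈ Finset.univ.filter (fun w => ¬ P w), ∏ i, p (w i) := by linarith
  rw [hstep]
  set Q : X × Bool → (Fin n → X) → Prop := fun xb w =>
    n * δ ^ 2 / 2 ≤ (if xb.2 then δ/2 else -(δ/2))
      * (((Finset.univ.filter fun i => w i = xb.1).card : ℝ) - n * p xb.1) with hQ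
  have hcover : ∀ w : Fin n → X, ¬ P w → ∃ xb : X × Bool, Q xb w := by
    intro w hw
    simp only [hP, not_forall, not_le] at hw
    obtain ⟨x, hx⟩ := hw
    set d : ℝ := ((Finset.univ.filter fun i => w i = x).card : ℝ) - n * p x with hd
    rcases le_or_gt 0 d with h0 | h0
    · refine ⟨(x, true), ?_⟩
      have hQ' : Q (x, true) w ↔ n * δ ^ 2 / 2 ≤ (δ/2) * d := by
        simp [hQ, hd]
      rw [hQ']
      rw [abs_of_nonneg h0] at hx
      nlinarith
    · refine ⟨(x, false), ?_⟩
      have hQ' : Q (x, false) w ↔ n * δ ^ 2 / 2 ≤ -(δ/2) * d := by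
        simp [hQ, hd]
      rw [hQ']
      rw [abs_of_neg h0] at hx
      nlinarith
  have hub := tp_union_bound (ι := X × Bool) (fun w => ¬ P w) Q
    (fun w : Fin n → X => ∏ i, p (w i))
    (fun w => Finset.prod_nonneg fun i _ => hp0 _) hcover
  refine hub.trans ?_
  have hbound : ∀ xb : X × Bool,
      ∑ w ∈ Finset.univ.filter (Q xb), ∏ i, p (w i) ≤ Real.exp (-(n : ℝ) * δ ^ 2 / 4) := by
    intro xb
    have ht : |if xb.2 then δ/2 else -(δ/2)| ≤ 1 := by
      rcases xb.2 <;> simp <;> rw [abs_of_nonneg (by linarith)] <;> linarith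
    have := tp_chernoff p hp0 hp1 n xb.1 (if xb.2 then δ/2 else -(δ/2)) (n * δ ^ 2 / 2) ht
      (tp_mgf_bound p hp0 hp1 xb.1 _ ht)
    refine this.trans (le_of_eq ?_)
    congr 1
    have hsq : (if xb.2 then δ/2 else -(δ/2)) ^ 2 = δ ^ 2 / 4 := by
      rcases xb.2 <;> simp <;> ring
    rw [hsq]
    ring
  calc ∑ xb : X × Bool, ∑ w ∈ Finset.univ.filter (Q xb), ∏ i, p (w i)
      ≤ ∑ _xb : X × Bool, Real.exp (-(n : ℝ) * δ ^ 2 / 4) :=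
        Finset.sum_le_sum fun xb _ => hbound xb
    _ = 2 * (Fintype.card X) * Real.exp (-(n : ℝ) * δ ^ 2 / 4) := by
        rw [Finset.sum_const, Finset.card_univ, Fintype.card_prod, Fintype.card_bool,
          nsmul_eq_mul]
        push_cast
        ring

open Finset in
private lemma tp_inner_eval {X : Type*} [Fintype X] [DecidableEq X]
    (p : X → ℝ) (ρ : Matrix X X ℂ) (e : X → X → ℂ)
    (he : OrthonormalFamily e)
    (hρ : ρ = ∑ x, (p x : ℂ) • Matrix.vecMulVec (e x) (star (e x))) (k : X) :
    ∑ y, ∑ z, ρ y z * e k z * (starRingEnd ℂ) (e k y) = (p k : ℂ) := by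
  have hent : ∀ y z, ρ y z = ∑ x, (p x : ℂ) * (e x y * (starRingEnd ℂ) (e x z)) := by
    intro y z
    rw [hρ]
    simp [Matrix.sum_apply, Matrix.vecMulVec_apply, Complex.star_def]
  calc ∑ y, ∑ z, ρ y z * e k z * (starRingEnd ℂ) (e k y)
      = ∑ x, ∑ y, ∑ z, (p x : ℂ) * (e x y * (starRingEnd ℂ) (e x z)) * e k z
          * (starRingEnd ℂ) (e k y) := by
        simp only [hent, Finset.sum_mul]
        have hswap : ∀ y : X, (∑ z, ∑ x, (p x : ℂ) * (e x y * (starRingEnd ℂ) (e x z)) * e k z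
            * (starRingEnd ℂ) (e k y))
            = ∑ x, ∑ z, (p x : ℂ) * (e x y * (starRingEnd ℂ) (e x z)) * e k z
            * (starRingEnd ℂ) (e k y) := fun y => Finset.sum_comm
        simp only [hswap]
        rw [Finset.sum_comm]
    _ = ∑ x, (p x : ℂ) * ((∑ y, (starRingEnd ℂ) (e k y) * e x y)
          * (∑ z, (starRingEnd ℂ) (e x z) * e k z)) := by
        refine Finset.sum_congr rfl fun x _ => ?_
        rw [Finset.sum_mul_sum, Finset.mul_sum]
        refine Finset.sum_congr rfl fun y _ => ?_
        rw [Finset.mul_sum]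
        refine Finset.sum_congr rfl fun z _ => ?_
        ring
    _ = (p k : ℂ) := by
        have he' : ∀ k l, (∑ a, (starRingEnd ℂ) (e k a) * e l a)
            = if k = l then (1:ℂ) else 0 := he
        simp only [he']
        simp [eq_comm]

open Finset in
private lemma tp_trace_eq {X : Type*} [Fintype X] [DecidableEq X]
    (p : X → ℝ) (n : ℕ) (δ : ℝ) (ρ : Matrix X X ℂ) (e : X → X → ℂ)
    (he : OrthonormalFamily e)
    (hρ : ρ = ∑ x, (p x : ℂ) • Matrix.vecMulVec (e x) (star (e x))) :
    (tensorPow ρ n * typicalProj e p n δ).trace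
      = ((∑ w ∈ typicalSet p n δ, ∏ i, p (w i) : ℝ) : ℂ) := by
  have key : ∀ f : Fin n → X,
      ∑ a : Fin n → X, ∑ b : Fin n → X,
        (∏ i, ρ (a i) (b i)) * ((∏ i, e (f i) (b i)) * ∏ i, (starRingEnd ℂ) (e (f i) (a i)))
      = ∏ i, (p (f i) : ℂ) := by
    intro f
    have h1 : ∀ a b : Fin n → X,
        (∏ i, ρ (a i) (b i)) * ((∏ i, e (f i) (b i)) * ∏ i, (starRingEnd ℂ) (e (f i) (a i)))
        = ∏ i, (ρ (a i) (b i) * e (f i) (b i) * (starRingEnd ℂ) (e (f i) (a i))) := by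
      intro a b
      rw [Finset.prod_mul_distrib, Finset.prod_mul_distrib]
      ring
    simp only [h1]
    have h2 : ∀ a : Fin n → X,
        ∑ b : Fin n → X, ∏ i, (ρ (a i) (b i) * e (f i) (b i) * (starRingEnd ℂ) (e (f i) (a i)))
        = ∏ i, ∑ z, (ρ (a i) z * e (f i) z * (starRingEnd ℂ) (e (f i) (a i))) :=
      fun a => (Fintype.prod_sum fun i z => ρ (a i) z * e (f i) z
        * (starRingEnd ℂ) (e (f i) (a i))).symm
    simp only [h2]
    rw [← Fintype.prod_sum fun i y => ∑ z, (ρ y z * e (f i) z * (starRingEnd ℂ) (e (f i) y))]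
    refine Finset.prod_congr rfl fun i _ => ?_
    exact tp_inner_eval p ρ e he hρ (f i)
  rw [Matrix.trace]
  push_cast
  simp only [Matrix.diag_apply, Matrix.mul_apply, tensorPow, typicalProj, Matrix.sum_apply,
    Matrix.of_apply, Finset.mul_sum]
  rw [Finset.sum_comm]
  refine Finset.sum_congr rfl fun f hf => ?_
  rw [Finset.sum_comm]
  rw [Finset.sum_comm]
  exact key f

open Finset in
private lemma tp_final_classical {X : Type*} [Fintype X] [DecidableEq X]
    (p : X → ℝ) (hp0 : ∀ x, 0 ≤ p x) (hp1 : ∑ x, p x = 1)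
    (δ : ℝ) (hδ : 0 < δ) :
    ∃ c > (0 : ℝ), ∃ N : ℕ, ∀ n ≥ N,
      1 - (2 : ℝ) ^ (-(n : ℝ) * c * δ ^ 2) ≤ ∑ w ∈ typicalSet p n δ, ∏ i, p (w i) := by
  by_cases hδ1 : 1 < δ
  · refine ⟨1, one_pos, 0, fun n _ => ?_⟩
    have hT : typicalSet p n δ = Finset.univ := by
      apply Finset.filter_true_of_mem
      intro w _ x
      have hc1 : ((Finset.univ.filter fun i => w i = x).card : ℝ) ≤ n := by
        have := Finset.card_filter_le (Finset.univ : Finset (Fin n)) (fun i => w i = x)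
        simpa using (Nat.cast_le (α := ℝ)).mpr this
      have hc0 : (0:ℝ) ≤ ((Finset.univ.filter fun i => w i = x).card : ℝ) := Nat.cast_nonneg _
      have hpx1 : p x ≤ 1 := hp1 ▸ Finset.single_le_sum (fun a _ => hp0 a) (mem_univ x)
      have hpx0 := hp0 x
      have hn0 : (0:ℝ) ≤ (n:ℝ) := Nat.cast_nonneg _
      rw [abs_le]
      constructor <;> nlinarith
    rw [hT, tp_sum_prod_pow, hp1, one_pow]
    have : (0:ℝ) < (2:ℝ) ^ (-(n : ℝ) * 1 * δ ^ 2) := Real.rpow_pos_of_pos two_pos _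
    linarith
  · push_neg at hδ1
    have hlog2 : (0:ℝ) < Real.log 2 := Real.log_pos (by norm_num)
    refine ⟨1 / (8 * Real.log 2), by positivity,
      ⌈8 * Real.log (2 * (Fintype.card X) + 1) / δ ^ 2⌉₊, fun n hn => ?_⟩
    have hK0 : (0:ℝ) ≤ (Fintype.card X : ℝ) := Nat.cast_nonneg _
    have hmain := tp_classical_main p hp0 hp1 δ hδ hδ1 n
    have hnge : 8 * Real.log (2 * (Fintype.card X) + 1) / δ ^ 2 ≤ (n:ℝ) :=
      le_trans (Nat.le_ceil _) (Nat.cast_le.mpr hn)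
    have hlgle : Real.log (2 * (Fintype.card X) + 1) ≤ (n:ℝ) * δ ^ 2 / 8 := by
      rw [div_le_iff₀ (by positivity)] at hnge
      linarith
    have h2K : 2 * (Fintype.card X : ℝ) ≤ Real.exp ((n:ℝ) * δ ^ 2 / 8) := by
      have := Real.exp_le_exp.mpr hlgle
      rw [Real.exp_log (by positivity)] at this
      linarith
    have hstep : 2 * (Fintype.card X : ℝ) * Real.exp (-(n : ℝ) * δ ^ 2 / 4)
        ≤ Real.exp (-((n:ℝ) * δ ^ 2 / 8)) := by
      have hsplit : Real.exp (-(n : ℝ) * δ ^ 2 / 4)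
          = Real.exp (-((n:ℝ) * δ ^ 2 / 8)) * Real.exp (-((n:ℝ) * δ ^ 2 / 8)) := by
        rw [← Real.exp_add]; ring_nf
      rw [hsplit, ← mul_assoc]
      calc 2 * (Fintype.card X : ℝ) * Real.exp (-((n:ℝ) * δ ^ 2 / 8))
            * Real.exp (-((n:ℝ) * δ ^ 2 / 8))
          ≤ Real.exp ((n:ℝ) * δ ^ 2 / 8) * Real.exp (-((n:ℝ) * δ ^ 2 / 8))
            * Real.exp (-((n:ℝ) * δ ^ 2 / 8)) := by
            have he := (Real.exp_pos (-((n:ℝ) * δ ^ 2 / 8))).le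
            apply mul_le_mul_of_nonneg_right _ he
            exact mul_le_mul_of_nonneg_right h2K he
        _ = Real.exp (-((n:ℝ) * δ ^ 2 / 8)) := by
            rw [← Real.exp_add, ← Real.exp_add]; ring_nf
    have hrpow : (2:ℝ) ^ (-(n : ℝ) * (1 / (8 * Real.log 2)) * δ ^ 2)
        = Real.exp (-((n:ℝ) * δ ^ 2 / 8)) := by
      rw [Real.rpow_def_of_pos two_pos]
      congr 1
      field_simp
    rw [hrpow]
    linarith

/-- High-probability of the typical set: there are `c > 0` and `N` such that for all
`n ≥ N` the i.i.d. product measure of `T^n_{p,δ}` is at least `1 − 2^{−ncδ²}`;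
equivalently, for a density matrix `ρ` with eigenvalue distribution `p`,
`tr(ρ^{⊗n} Π_{ρ,δ}) ≥ 1 − 2^{−ncδ²}`. -/
theorem stmt_9 {X : Type*} [Fintype X] [DecidableEq X]
    (p : X → ℝ) (hp0 : ∀ x, 0 ≤ p x) (hp1 : ∑ x, p x = 1)
    (δ : ℝ) (hδ : 0 < δ) :
    ∃ c > (0 : ℝ), ∃ N : ℕ, ∀ n ≥ N,
      (1 - (2 : ℝ) ^ (-(n : ℝ) * c * δ ^ 2) ≤ ∑ w ∈ typicalSet p n δ, ∏ i, p (w i)) ∧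
      (∀ (ρ : Matrix X X ℂ) (e : X → X → ℂ),
        OrthonormalFamily e →
        ρ = ∑ x, (p x : ℂ) • Matrix.vecMulVec (e x) (star (e x)) →
        1 - (2 : ℝ) ^ (-(n : ℝ) * c * δ ^ 2) ≤
          ((tensorPow ρ n * typicalProj e p n δ).trace).re) := by
  obtain ⟨c, hc, N, h⟩ := tp_final_classical p hp0 hp1 δ hδ
  refine ⟨c, hc, N, fun n hn => ⟨h n hn, fun ρ e he hρ => ?_⟩⟩
  rw [tp_trace_eq p n δ ρ e he hρ, Complex.ofReal_re]
  exact h n hn
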